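/- arXiv:1705.08525 — 4 statements merged into one kernel-verified Lean document; each statement's English description precedes it below -/
import Mathlib

section
/- Suppose the expected conditional variance V of the unbiased estimator Ĥ is strictly positive. Then for every constant μ ∈ ℝ there exists a shrinkage coefficient α with 0 < α < 1 such that the shrunk estimator k̃(ω,w) = α·μ + (1−α)·Ĥ(ω,w) has strictly smaller risk than Ĥ, i.e. R(k̃) < R(Ĥ). (Theorem: Stein effect on kernel approximation.) -/
/-!
Because `Ĥ(ω, ·)` has conditional mean `T ω`, the risk of the shrunk estimator splits as a
variance term and a bias term, `R(k̃) = (1 - α)² V + α² B(μ)`, and `R(Ĥ) = V` is the case `α = 0`.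
The derivative of `α ↦ (1 - α)² V + α² B(μ)` at `0` is `-2V < 0`, so small positive `α` helps;
`α = V / (2V + B(μ))` is an explicit choice.
-/

open MeasureTheory ProbabilityTheory

namespace ProbabilityTheory

variable {Ω : Type*} [MeasurableSpace Ω] {μ : Measure Ω} [IsProbabilityMeasure μ] {X : Ω → ℝ}

lemma integral_sub_sq_eq_variance_add (hX : MemLp X 2 μ) (c : ℝ) :
    ∫ ω, (X ω - c) ^ 2 ∂μ = Var[X; μ] + (μ[X] - c) ^ 2 := by
  have hXc : MemLp (fun ω ↦ X ω - c) 2 μ := hX.sub (memLp_const c)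
  have hmean : μ[fun ω ↦ X ω - c] = μ[X] - c := by
    rw [integral_sub (hX.integrable one_le_two) (integrable_const c), integral_const]
    simp
  rw [← variance_sub_const hX.aestronglyMeasurable c, variance_eq_sub hXc, hmean]
  simp only [Pi.pow_apply]
  ring

lemma integral_shrink_sub_sq_eq (hX : MemLp X 2 μ) (a c : ℝ) :
    ∫ ω, (a * c + (1 - a) * X ω - μ[X]) ^ 2 ∂μ
      = (1 - a) ^ 2 * Var[X; μ] + a ^ 2 * (c - μ[X]) ^ 2 := by
  have hshrink : MemLp (fun ω ↦ a * c + (1 - a) * X ω) 2 μ :=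
    (memLp_const (a * c)).add (hX.const_mul (1 - a))
  have hmean : μ[fun ω ↦ a * c + (1 - a) * X ω] = a * c + (1 - a) * μ[X] := by
    rw [integral_add (integrable_const _) ((hX.integrable one_le_two).const_mul _),
      integral_const, integral_const_mul]
    simp
  rw [integral_sub_sq_eq_variance_add hshrink, hmean,
    variance_const_add (hX.aestronglyMeasurable.const_mul _), variance_const_mul]
  ring

end ProbabilityTheory

namespace MeasureTheory

variable {α β : Type*} [MeasurableSpace α] [MeasurableSpace β] {μ : Measure α} {ν : Measure β}
  [SFinite μ] [SFinite ν]

lemma MemLp.ae_memLp_two_prodMk_left {f : α × β → ℝ} (hf : MemLp f 2 (μ.prod ν)) :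
    ∀ᵐ x ∂μ, MemLp (fun y ↦ f (x, y)) 2 ν := by
  filter_upwards [hf.integrable_sq.prod_right_ae, hf.aestronglyMeasurable.prodMk_left]
    with x hsq hmeas
  exact (memLp_two_iff_integrable_sq hmeas).mpr hsq

end MeasureTheory

lemma exists_shrink_lt {V B : ℝ} (hV : 0 < V) (hB : 0 ≤ B) :
    ∃ a : ℝ, 0 < a ∧ a < 1 ∧ (1 - a) ^ 2 * V + a ^ 2 * B < V := by
  have hden : 0 < 2 * V + B := by linarith
  refine ⟨V / (2 * V + B), div_pos hV hden, (div_lt_one hden).mpr (by linarith), ?_⟩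
  rw [div_pow, ← sub_pos]
  field_simp
  nlinarith [mul_pos hV hV, mul_nonneg hV.le hB, mul_pos (mul_pos hV hV) hV]

section Shrinkage

variable {Ω W : Type*} [MeasurableSpace Ω] [MeasurableSpace W]
  {P : Measure Ω} {Q : Measure W} [IsProbabilityMeasure P] [IsProbabilityMeasure Q]
  {T : Ω → ℝ} {H : Ω → W → ℝ}

lemma integrable_variance_of_integral_eq (hT : MemLp T 2 P)
    (hH : MemLp (fun p : Ω × W ↦ H p.1 p.2) 2 (P.prod Q))
    (hUnbiased : ∀ᵐ ω ∂P, ∫ w, H ω w ∂Q = T ω) :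
    Integrable (fun ω ↦ Var[H ω; Q]) P := by
  have hTfst : MemLp (fun p : Ω × W ↦ T p.1) 2 (P.prod Q) :=
    hT.comp_measurePreserving measurePreserving_fst
  refine ((hH.sub hTfst).integrable_sq.integral_prod_left).congr ?_
  filter_upwards [hH.ae_memLp_two_prodMk_left, hUnbiased] with ω hslice hmean
  simp only [Pi.sub_apply, variance_eq_integral hslice.aemeasurable, hmean]

lemma integral_integral_shrink_sub_sq (hT : MemLp T 2 P)
    (hH : MemLp (fun p : Ω × W ↦ H p.1 p.2) 2 (P.prod Q))
    (hUnbiased : ∀ᵐ ω ∂P, ∫ w, H ω w ∂Q = T ω) (a c : ℝ) :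
    ∫ ω, ∫ w, (a * c + (1 - a) * H ω w - T ω) ^ 2 ∂Q ∂P
      = (1 - a) ^ 2 * ∫ ω, Var[H ω; Q] ∂P + a ^ 2 * ∫ ω, (c - T ω) ^ 2 ∂P := by
  have hbias : Integrable (fun ω ↦ (c - T ω) ^ 2) P := ((memLp_const c).sub hT).integrable_sq
  have hcond : ∀ᵐ ω ∂P, ∫ w, (a * c + (1 - a) * H ω w - T ω) ^ 2 ∂Q
      = (1 - a) ^ 2 * Var[H ω; Q] + a ^ 2 * (c - T ω) ^ 2 := by
    filter_upwards [hH.ae_memLp_two_prodMk_left, hUnbiased] with ω hslice hmean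
    rw [← hmean]
    exact integral_shrink_sub_sq_eq hslice a c
  rw [integral_congr_ae hcond,
    integral_add ((integrable_variance_of_integral_eq hT hH hUnbiased).const_mul _)
      (hbias.const_mul _), integral_const_mul, integral_const_mul]

end Shrinkage

/-- **Stein effect on kernel approximation.**
Suppose the expected conditional variance `V` of the conditionally unbiased estimator `H`
is strictly positive.  Then for every constant `μ ∈ ℝ` there exists a shrinkage coefficient
`α` with `0 < α < 1` such that the shrunk estimator
`k̃ (ω, w) = α • μ + (1 - α) • H (ω, w)` has strictly smaller risk than `H`. -/
theorem stein_effect_on_kernel_approximation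
    {Ω W : Type*} [MeasurableSpace Ω] [MeasurableSpace W]
    (P : Measure Ω) (Q : Measure W) [IsProbabilityMeasure P] [IsProbabilityMeasure Q]
    (T : Ω → ℝ) (H : Ω → W → ℝ)
    (hT : MemLp T 2 P)
    (hH : MemLp (fun p : Ω × W => H p.1 p.2) 2 (P.prod Q))
    (hUnbiased : ∀ᵐ ω ∂P, ∫ w, H ω w ∂Q = T ω)
    (R : (Ω → W → ℝ) → ℝ)
    (hR : ∀ g : Ω → W → ℝ, R g = ∫ ω, ∫ w, (g ω w - T ω) ^ 2 ∂Q ∂P)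
    (V : ℝ)
    (hV : V = ∫ ω, variance (fun w => H ω w) Q ∂P)
    (hVpos : 0 < V) :
    ∀ μ : ℝ, ∃ α : ℝ, 0 < α ∧ α < 1 ∧
      R (fun ω w => α * μ + (1 - α) * H ω w) < R H := by
  intro μ
  have hrisk : ∀ α, R (fun ω w => α * μ + (1 - α) * H ω w)
      = (1 - α) ^ 2 * V + α ^ 2 * ∫ ω, (μ - T ω) ^ 2 ∂P := fun α ↦ by
    rw [hR, hV, integral_integral_shrink_sub_sq hT hH hUnbiased]
  have hriskH : R H = V := by
    simpa using hrisk 0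
  obtain ⟨α, hα0, hα1, hlt⟩ :=
    exists_shrink_lt hVpos (integral_nonneg fun ω ↦ sq_nonneg (μ - T ω))
  exact ⟨α, hα0, hα1, by rwa [hrisk, hriskH]⟩
end

section
/- Corollary (shrinkage estimator): suppose V > 0. Then, taking μ = 0 and α* = V/(V + ∫_Ω T(ω)² dP(ω)), the purely multiplicative shrinkage estimator k̃(ω,w) = (1−α*)·Ĥ(ω,w) has strictly smaller risk than the empirical-mean estimator: R((1−α*)·Ĥ) < R(Ĥ). -/
/-!
By conditional unbiasedness, for each `ω` the bias–variance decomposition gives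
`∫ (c Ĥ(ω,·) - T ω)² dQ = c² Var_w Ĥ(ω,·) + (1 - c)² T(ω)²`, so integrating over `ω`,
`R(c Ĥ) = c² V + (1 - c)² ∫ T²`. This quadratic in `c` equals `V` at `c = 1` and is minimised at
`c = 1 - α*`, where it equals `V ∫ T² / (V + ∫ T²) < V`.
-/

open MeasureTheory ProbabilityTheory

namespace ProbabilityTheory

variable {Ω : Type*} [MeasurableSpace Ω] {μ : Measure Ω} [IsProbabilityMeasure μ] {X : Ω → ℝ}

theorem integral_sq_sub_eq_variance_add (hX : MemLp X 2 μ) (a : ℝ) :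
    ∫ ω, (X ω - a) ^ 2 ∂μ = Var[X; μ] + (μ[X] - a) ^ 2 := by
  have hXa : MemLp (fun ω => X ω - a) 2 μ := hX.sub (memLp_const a)
  have hmean : ∫ ω, (X ω - a) ∂μ = μ[X] - a := by
    simp [integral_sub (hX.integrable one_le_two) (integrable_const a)]
  rw [← variance_sub_const hX.aestronglyMeasurable a, variance_eq_sub hXa, hmean]
  simp

theorem integral_sq_mul_sub_of_integral_eq {a : ℝ} (hX : MemLp X 2 μ) (hXa : μ[X] = a) (c : ℝ) :
    ∫ ω, (c * X ω - a) ^ 2 ∂μ = c ^ 2 * Var[X; μ] + (1 - c) ^ 2 * a ^ 2 := by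
  rw [integral_sq_sub_eq_variance_add (hX.const_mul c), variance_const_mul, integral_const_mul,
    hXa]
  ring

end ProbabilityTheory

section Slices

variable {α β : Type*} [MeasurableSpace α] [MeasurableSpace β] {μ : Measure α} {ν : Measure β}
  [SFinite μ] [SFinite ν]

theorem MeasureTheory.MemLp.ae_memLp_two_prodMk_left_s4 {f : α × β → ℝ} (hf : MemLp f 2 (μ.prod ν)) :
    ∀ᵐ x ∂μ, MemLp (fun y => f (x, y)) 2 ν := by
  filter_upwards [hf.aestronglyMeasurable.prodMk_left, hf.integrable_sq.prod_right_ae]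
    with x hmeas hsq
  exact (memLp_two_iff_integrable_sq hmeas).2 hsq

end Slices

section Unbiased

variable {Ω W : Type*} [MeasurableSpace Ω] [MeasurableSpace W] {P : Measure Ω} {Q : Measure W}
  [SFinite P] [IsProbabilityMeasure Q] {T : Ω → ℝ} {H : Ω → W → ℝ}

theorem integral_integral_sq_mul_sub_of_unbiased (hT : MemLp T 2 P)
    (hH : MemLp (fun p : Ω × W => H p.1 p.2) 2 (P.prod Q))
    (hUnbiased : ∀ᵐ ω ∂P, ∫ w, H ω w ∂Q = T ω) (c : ℝ) :
    ∫ ω, ∫ w, (c * H ω w - T ω) ^ 2 ∂Q ∂P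
      = c ^ 2 * ∫ ω, Var[H ω; Q] ∂P + (1 - c) ^ 2 * ∫ ω, T ω ^ 2 ∂P := by
  have hslice : ∀ᵐ ω ∂P, MemLp (H ω) 2 Q := hH.ae_memLp_two_prodMk_left_s4
  have hinner : ∀ᵐ ω ∂P, ∫ w, (c * H ω w - T ω) ^ 2 ∂Q
      = c ^ 2 * Var[H ω; Q] + (1 - c) ^ 2 * T ω ^ 2 := by
    filter_upwards [hslice, hUnbiased] with ω hmem hmean
    exact integral_sq_mul_sub_of_integral_eq hmem hmean c
  have hvar : Integrable (fun ω => Var[H ω; Q]) P := by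
    refine (hH.integrable_sq.integral_prod_left.sub hT.integrable_sq).congr ?_
    filter_upwards [hslice, hUnbiased] with ω hmem hmean
    simp [variance_eq_sub hmem, hmean]
  rw [integral_congr_ae hinner, integral_add (hvar.const_mul _) (hT.integrable_sq.const_mul _),
    integral_const_mul, integral_const_mul]

end Unbiased

theorem one_sub_sq_mul_add_sq_mul_lt_of_eq_div {V S α : ℝ} (hV : 0 < V) (hS : 0 ≤ S)
    (hα : α = V / (V + S)) : (1 - α) ^ 2 * V + α ^ 2 * S < V := by
  have hVS : 0 < V + S := by linarith
  have hvalue : (1 - α) ^ 2 * V + α ^ 2 * S = V * S / (V + S) := by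
    rw [hα]
    field_simp
    ring
  rw [hvalue, div_lt_iff₀ hVS]
  nlinarith

/-- **Corollary (shrinkage estimator).**
Suppose `V > 0`.  Then, taking `μ = 0` and `α* = V / (V + ∫ T ω ² dP ω)`,
the purely multiplicative shrinkage estimator `k̃ (ω, w) = (1 - α*) • H (ω, w)`
has strictly smaller risk than the empirical-mean estimator:
`R ((1 - α*) • H) < R H`. -/
theorem shrinkage_estimator_corollary
    {Ω W : Type*} [MeasurableSpace Ω] [MeasurableSpace W]
    (P : Measure Ω) (Q : Measure W) [IsProbabilityMeasure P] [IsProbabilityMeasure Q]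
    (T : Ω → ℝ) (H : Ω → W → ℝ)
    (hT : MemLp T 2 P)
    (hH : MemLp (fun p : Ω × W => H p.1 p.2) 2 (P.prod Q))
    (hUnbiased : ∀ᵐ ω ∂P, ∫ w, H ω w ∂Q = T ω)
    (R : (Ω → W → ℝ) → ℝ)
    (hR : ∀ g : Ω → W → ℝ, R g = ∫ ω, ∫ w, (g ω w - T ω) ^ 2 ∂Q ∂P)
    (V : ℝ)
    (hV : V = ∫ ω, variance (fun w => H ω w) Q ∂P)
    (hVpos : 0 < V)
    (αStar : ℝ) (hαStar : αStar = V / (V + ∫ ω, T ω ^ 2 ∂P)) :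
    R (fun ω w => (1 - αStar) * H ω w) < R H := by
  have hrisk := integral_integral_sq_mul_sub_of_unbiased hT hH hUnbiased
  have hRH : R H = V := by
    simpa [hR, ← hV] using hrisk 1
  rw [hR, hrisk, ← hV, sub_sub_cancel, hRH]
  exact one_sub_sq_mul_add_sq_mul_lt_of_eq_div hVpos (integral_nonneg fun ω => sq_nonneg (T ω))
    hαStar
end

section
/- Unbiasedness of random Fourier features for the Gaussian kernel: for every σ > 0 and every x, x' ∈ ℝ^d, if w is distributed according to the Gaussian measure N(0, σ^{-2} I_d) on ℝ^d, then ∫_{ℝ^d} [cos(⟨w, x⟩)·cos(⟨w, x'⟩) + sin(⟨w, x⟩)·sin(⟨w, x'⟩)] dN(0, σ^{-2} I_d)(w) = exp(−‖x − x'‖² / (2σ²)). -/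
open MeasureTheory ProbabilityTheory Complex
open scoped NNReal RealInnerProductSpace

/-!
Since `cos a cos b + sin a sin b = cos (a - b)`, the integrand is `cos ⟪w, x - x'⟫`, whose integral
is the real part of the characteristic function of the Gaussian at `x - x'`. The Gaussian is a
product of one-dimensional ones, so its characteristic function is the product
`∏ i, exp (-σ⁻² (x i - x' i)² / 2)`.
-/

lemma integral_cos_inner_eq_re_charFun {E : Type*} [NormedAddCommGroup E] [InnerProductSpace ℝ E]
    [MeasurableSpace E] [OpensMeasurableSpace E] (μ : Measure E) [IsFiniteMeasure μ] (t : E) :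
    ∫ x, Real.cos ⟪x, t⟫ ∂μ = (charFun μ t).re := by
  have hint : Integrable (fun x => cexp (⟪x, t⟫ * I)) μ := by
    refine (integrable_const (1 : ℝ)).mono' ?_ (.of_forall fun x => ?_)
    · exact (by fun_prop : Continuous fun x => cexp (⟪x, t⟫ * I)).aestronglyMeasurable
    · simp [norm_exp_ofReal_mul_I]
  rw [charFun_apply, ← RCLike.re_eq_complex_re, ← integral_re hint]
  simp only [RCLike.re_eq_complex_re, exp_ofReal_mul_I_re]

lemma charFun_map_toLp_pi_gaussianReal {ι : Type*} [Fintype ι] (v : ℝ≥0)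
    (t : EuclideanSpace ℝ ι) :
    charFun ((Measure.pi fun _ : ι => gaussianReal 0 v).map (WithLp.toLp 2)) t
      = cexp (-(v * ‖t‖ ^ 2 / 2)) := by
  rw [charFun_pi]
  simp_rw [charFun_gaussianReal, ← exp_sum]
  rw [← ofReal_pow, EuclideanSpace.real_norm_sq_eq]
  push_cast
  simp [Finset.mul_sum, Finset.sum_div]

lemma integral_cos_sum_mul_pi_gaussianReal {ι : Type*} [Fintype ι] (v : ℝ≥0) (y : ι → ℝ) :
    ∫ w, Real.cos (∑ i, w i * y i) ∂(Measure.pi fun _ : ι => gaussianReal 0 v)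
      = Real.exp (-(v * ∑ i, y i ^ 2) / 2) := by
  have hinner (w : ι → ℝ) : ∑ i, w i * y i = ⟪WithLp.toLp 2 w, WithLp.toLp 2 y⟫ := by
    simp [PiLp.inner_apply, mul_comm]
  simp_rw [hinner, ← MeasurableEquiv.coe_toLp]
  rw [← integral_map_equiv (MeasurableEquiv.toLp 2 (ι → ℝ)) fun v => Real.cos ⟪v, _⟫,
    integral_cos_inner_eq_re_charFun, MeasurableEquiv.coe_toLp,
    charFun_map_toLp_pi_gaussianReal, ← ofReal_pow, EuclideanSpace.real_norm_sq_eq]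
  norm_cast
  simp [neg_div]

/-- **Unbiasedness of random Fourier features for the Gaussian kernel.**
For every `σ > 0` and every `x, x' ∈ ℝ^d`, if `w` is distributed according to the
centered Gaussian measure `N(0, σ⁻² I_d)` on `ℝ^d` (the `d`-fold product of
`N(0, σ⁻²)`), then
`∫ [cos ⟨w, x⟩ · cos ⟨w, x'⟩ + sin ⟨w, x⟩ · sin ⟨w, x'⟩] dN(0, σ⁻² I_d)(w)
  = exp (-‖x - x'‖² / (2σ²))`. -/
theorem random_fourier_features_unbiased_gaussian
    (d : ℕ) (σ : ℝ) (x x' : Fin d → ℝ) :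
    ∫ w : Fin d → ℝ,
        (Real.cos (∑ i, w i * x i) * Real.cos (∑ i, w i * x' i)
          + Real.sin (∑ i, w i * x i) * Real.sin (∑ i, w i * x' i))
        ∂(Measure.pi fun _ : Fin d => gaussianReal 0 ⟨σ⁻¹ ^ 2, by positivity⟩)
      = Real.exp (-(∑ i, (x i - x' i) ^ 2) / (2 * σ ^ 2)) := by
  simp_rw [← Real.cos_sub, ← Finset.sum_sub_distrib, ← mul_sub]
  refine (integral_cos_sum_mul_pi_gaussianReal _ _).trans ?_
  congr 1
  -- the variance is a bare `Subtype.mk`, on which `NNReal.coe_mk` does not fire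
  show -(σ⁻¹ ^ 2 * _) / 2 = _
  ring
end

section
/- Positive semidefiniteness of the Gaussian kernel: for every σ > 0, every n, every x_1, …, x_n ∈ ℝ^d and every c_1, …, c_n ∈ ℝ, Σ_{i=1}^n Σ_{j=1}^n c_i c_j exp(−‖x_i − x_j‖² / (2σ²)) ≥ 0. -/
/-!
Since `‖u - v‖² = ‖u‖² + ‖v‖² - 2⟪u, v⟫`, the Gaussian kernel matrix is the entrywise exponential
of the Gram matrix scaled by `σ⁻²`, conjugated by the diagonal matrix with entries
`exp (-‖u‖² / (2σ²))`. The Gram matrix is positive semidefinite, hence so are its entrywise powers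
(Schur product theorem), and so is its entrywise exponential, the sum of the series
`∑ₘ Aᵐ / m!` of such powers with nonnegative coefficients.
-/

open Finset Matrix Real Nat

namespace Matrix

variable {ι : Type*} [Fintype ι]

theorem posSemidef_iff_sum_sum_mul_mul_nonneg {M : Matrix ι ι ℝ} :
    M.PosSemidef ↔ M.IsHermitian ∧ ∀ c : ι → ℝ, 0 ≤ ∑ i, ∑ j, c i * c j * M i j := by
  have hform (c : ι → ℝ) : star c ⬝ᵥ (M *ᵥ c) = ∑ i, ∑ j, c i * c j * M i j := by
    simp only [dotProduct, mulVec, star_trivial, Finset.mul_sum]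
    exact sum_congr rfl fun i _ => sum_congr rfl fun j _ => by ring
  simp only [posSemidef_iff_dotProduct_mulVec, hform]

theorem PosSemidef.map_pow {A : Matrix ι ι ℝ} (hA : A.PosSemidef) (m : ℕ) :
    (A.map (· ^ m)).PosSemidef := by
  induction m with
  | zero =>
    convert posSemidef_vecMulVec_self_star (1 : ι → ℝ)
    ext; simp
  | succ m ih =>
    rw [show A.map (· ^ (m + 1)) = A.map (· ^ m) ⊙ A by ext; simp [pow_succ]]
    exact ih.hadamard hA

theorem PosSemidef.map_exp {A : Matrix ι ι ℝ} (hA : A.PosSemidef) : (A.map exp).PosSemidef := by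
  refine posSemidef_iff_sum_sum_mul_mul_nonneg.2 ⟨hA.isHermitian.map _ fun _ => rfl, fun c => ?_⟩
  have hseries : HasSum (fun m : ℕ => ∑ i, ∑ j, c i * c j * (A i j ^ m / m !))
      (∑ i, ∑ j, c i * c j * exp (A i j)) :=
    hasSum_sum fun i _ => hasSum_sum fun j _ =>
      (exp_eq_exp_ℝ ▸ NormedSpace.expSeries_div_hasSum_exp (A i j)).mul_left _
  refine hseries.nonneg fun m => ?_
  have hterm := (hA.map_pow m).smul (inv_nonneg.2 (m !).cast_nonneg : (0 : ℝ) ≤ (m ! : ℝ)⁻¹)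
  simpa [div_eq_inv_mul] using (posSemidef_iff_sum_sum_mul_mul_nonneg.1 hterm).2 c

theorem posSemidef_gaussian {E : Type*} [NormedAddCommGroup E] [InnerProductSpace ℝ E]
    (σ : ℝ) (v : ι → E) :
    (of fun i j => exp (-‖v i - v j‖ ^ 2 / (2 * σ ^ 2))).PosSemidef := by
  classical
  set b : ι → ℝ := fun i => exp (-‖v i‖ ^ 2 / (2 * σ ^ 2))
  have hsplit : of (fun i j => exp (-‖v i - v j‖ ^ 2 / (2 * σ ^ 2)))
      = diagonal b * ((σ ^ 2)⁻¹ • gram ℝ v).map exp * (diagonal b)ᴴ := by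
    ext i j
    simp only [b, of_apply, conjTranspose_eq_transpose_of_trivial, diagonal_transpose,
      mul_diagonal, diagonal_mul, map_apply, smul_apply, smul_eq_mul, gram_apply,
      norm_sub_sq_real, ← exp_add, exp_eq_exp]
    ring
  rw [hsplit]
  exact ((posSemidef_gram ℝ v).smul (inv_nonneg.2 (sq_nonneg σ))).map_exp
    |>.mul_mul_conjTranspose_same _

end Matrix

theorem gaussian_kernel_positive_semidefinite_general
    (d : ℕ) (σ : ℝ) (n : ℕ)
    (x : Fin n → Fin d → ℝ) (c : Fin n → ℝ) :
    0 ≤ ∑ i, ∑ j,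
        c i * c j * Real.exp (-(∑ l, (x i l - x j l) ^ 2) / (2 * σ ^ 2)) := by
  have h := (posSemidef_iff_sum_sum_mul_mul_nonneg.1
    (posSemidef_gaussian σ fun i => WithLp.toLp 2 (x i))).2 c
  simpa [EuclideanSpace.norm_sq_eq, ← WithLp.toLp_sub] using h

/-- **Positive semidefiniteness of the Gaussian kernel.**
For every `σ > 0`, every `n`, every `x₁, …, xₙ ∈ ℝ^d` and every `c₁, …, cₙ ∈ ℝ`,
`∑ i ∑ j, c i * c j * exp (-‖x i - x j‖² / (2σ²)) ≥ 0`. -/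
theorem gaussian_kernel_positive_semidefinite
    (d : ℕ) (σ : ℝ) (hσ : 0 < σ) (n : ℕ)
    (x : Fin n → Fin d → ℝ) (c : Fin n → ℝ) :
    0 ≤ ∑ i, ∑ j,
        c i * c j * Real.exp (-(∑ l, (x i l - x j l) ^ 2) / (2 * σ ^ 2)) :=
  gaussian_kernel_positive_semidefinite_general d σ n x c
end
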